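/- Let (Φ, X⁰_α, X⁰_β, ξ) be a surface datum in S³ over a domain V ⊆ ℝ². Let φ̄, φ̄_z, P̄, P̄_z, κ̄₃ be smooth functions on V with sin φ̄ · cos φ̄ ≠ 0 everywhere; set e^{−P̄} := exp(−P̄), (e^{P̄})_z := e^{P̄} P̄_z, (e^{−P̄})_z := −e^{−P̄} P̄_z, κ̄₁ := e^{−P̄} tan φ̄ + κ̄₃ and κ̄₂ := −e^{−P̄} cot φ̄ + κ̄₃, with κ̄₁ κ̄₂ ≠ 0 everywhere. Suppose that on V: (1) Φ_x = −κ̄₁ e^{P̄} cos φ̄ · X⁰_α and Φ_y = −κ̄₂ e^{P̄} sin φ̄ · X⁰_β; (2) (X⁰_α)_y = ((e^{P̄} sin φ̄)_x/(e^{P̄} cos φ̄)) · X⁰_β and (X⁰_β)_x = ((e^{P̄} cos φ̄)_y/(e^{P̄} sin φ̄)) · X⁰_α; (3) ξ_x = e^{−P̄}((e^{P̄})_z cos φ̄ − e^{P̄} φ̄_z sin φ̄) · X⁰_α and ξ_y = e^{−P̄}((e^{P̄})_z sin φ̄ + e^{P̄} φ̄_z cos φ̄) · X⁰_β. Then ((e^{−P̄})_z)_x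 + (e^{−P̄})_x φ̄_z tan φ̄ − e^{−P̄} (φ̄_z)_x cot φ̄ = 0 and ((e^{−P̄})_z)_y − (e^{−P̄})_y φ̄_z cot φ̄ + e^{−P̄} (φ̄_z)_y tan φ̄ = 0 hold on V. (Proposition 4.2: the Codazzi condition forces equations (3.9) and (3.10).) -/

import Mathlib

noncomputable section

open Real
open scoped RealInnerProductSpace

/-- Partial derivative in the `x`-direction of a map on `ℝ² = ℝ × ℝ`. -/
def qx {E : Type*} [NormedAddCommGroup E] [NormedSpace ℝ E]
    (f : ℝ × ℝ → E) : ℝ × ℝ → E := fun q => fderiv ℝ f q (1, 0)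

/-- Partial derivative in the `y`-direction of a map on `ℝ² = ℝ × ℝ`. -/
def qy {E : Type*} [NormedAddCommGroup E] [NormedSpace ℝ E]
    (f : ℝ × ℝ → E) : ℝ × ℝ → E := fun q => fderiv ℝ f q (0, 1)

/-- Euclidean 4-space. -/
abbrev E4 := EuclideanSpace ℝ (Fin 4)

/-- A surface datum in `S³` over `V`: at each point of `V` the quadruple
`{X⁰_α, X⁰_β, ξ, Φ}` is orthonormal in `ℝ⁴`. -/
def IsSurfaceDatum (V : Set (ℝ × ℝ)) (Φ Xa Xb ξ : ℝ × ℝ → E4) : Prop :=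
  ∀ q ∈ V,
    ⟪Xa q, Xa q⟫ = 1 ∧ ⟪Xb q, Xb q⟫ = 1 ∧ ⟪ξ q, ξ q⟫ = 1 ∧ ⟪Φ q, Φ q⟫ = 1 ∧
    ⟪Xa q, Xb q⟫ = 0 ∧ ⟪Xa q, ξ q⟫ = 0 ∧ ⟪Xa q, Φ q⟫ = 0 ∧
    ⟪Xb q, ξ q⟫ = 0 ∧ ⟪Xb q, Φ q⟫ = 0 ∧ ⟪ξ q, Φ q⟫ = 0

/-- `e^{−P̄}` on `V`. -/
def Ebar (Pb : ℝ × ℝ → ℝ) : ℝ × ℝ → ℝ := fun q => exp (-(Pb q))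

/-- `(e^{−P̄})_z := −e^{−P̄} P̄_z` on `V`. -/
def EbarZ (Pb Pbz : ℝ × ℝ → ℝ) : ℝ × ℝ → ℝ := fun q => -(Ebar Pb q * Pbz q)

section helpers
variable {f g : ℝ × ℝ → ℝ} {q v : ℝ × ℝ}

lemma fd_mul (hf : DifferentiableAt ℝ f q) (hg : DifferentiableAt ℝ g q) :
    fderiv ℝ (fun p => f p * g p) q v
      = fderiv ℝ f q v * g q + f q * fderiv ℝ g q v := by
  rw [fderiv_fun_mul hf hg]; simp; ring

lemma fd_sin (hf : DifferentiableAt ℝ f q) :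
    fderiv ℝ (fun p => Real.sin (f p)) q v = Real.cos (f q) * fderiv ℝ f q v := by
  have h := ((Real.hasDerivAt_sin (f q)).comp_hasFDerivAt q hf.hasFDerivAt).fderiv
  rw [show (fun p => Real.sin (f p)) = Real.sin ∘ f from rfl, h]; simp

lemma fd_cos (hf : DifferentiableAt ℝ f q) :
    fderiv ℝ (fun p => Real.cos (f p)) q v = -(Real.sin (f q)) * fderiv ℝ f q v := by
  have h := ((Real.hasDerivAt_cos (f q)).comp_hasFDerivAt q hf.hasFDerivAt).fderiv
  rw [show (fun p => Real.cos (f p)) = Real.cos ∘ f from rfl, h]; simp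

lemma fd_exp (hf : DifferentiableAt ℝ f q) :
    fderiv ℝ (fun p => Real.exp (f p)) q v = Real.exp (f q) * fderiv ℝ f q v := by
  have h := ((Real.hasDerivAt_exp (f q)).comp_hasFDerivAt q hf.hasFDerivAt).fderiv
  rw [show (fun p => Real.exp (f p)) = Real.exp ∘ f from rfl, h]; simp

lemma fd_neg :
    fderiv ℝ (fun p => -(f p)) q v = -(fderiv ℝ f q v) := by
  rw [fderiv_fun_neg]; simp

lemma fd_add (hf : DifferentiableAt ℝ f q) (hg : DifferentiableAt ℝ g q) :
    fderiv ℝ (fun p => f p + g p) q v = fderiv ℝ f q v + fderiv ℝ g q v := by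
  rw [fderiv_fun_add hf hg]; simp

lemma fd_sub (hf : DifferentiableAt ℝ f q) (hg : DifferentiableAt ℝ g q) :
    fderiv ℝ (fun p => f p - g p) q v = fderiv ℝ f q v - fderiv ℝ g q v := by
  rw [fderiv_fun_sub hf hg]; simp

lemma fd_smul {F : Type*} [NormedAddCommGroup F] [NormedSpace ℝ F] {h : ℝ × ℝ → F}
    (hf : DifferentiableAt ℝ f q) (hh : DifferentiableAt ℝ h q) :
    fderiv ℝ (fun p => f p • h p) q v
      = (fderiv ℝ f q v) • h q + f q • (fderiv ℝ h q v) := by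
  rw [(hf.hasFDerivAt.fun_smul hh.hasFDerivAt).fderiv]
  simp [ContinuousLinearMap.smulRight_apply]
  module

end helpers

lemma mixed_symm {E : Type*} [NormedAddCommGroup E] [NormedSpace ℝ E]
    {f : ℝ × ℝ → E} {V : Set (ℝ × ℝ)} {q : ℝ × ℝ}
    (hVopen : IsOpen V) (hq : q ∈ V) (hf : ContDiffOn ℝ (⊤ : ℕ∞) f V) :
    fderiv ℝ (fun p => fderiv ℝ f p (1, 0)) q (0, 1)
      = fderiv ℝ (fun p => fderiv ℝ f p (0, 1)) q (1, 0) := by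
  have hfa : ContDiffAt ℝ 2 f q :=
    (hf.contDiffAt (hVopen.mem_nhds hq)).of_le (by exact WithTop.coe_le_coe.mpr le_top)
  have hsymm := hfa.isSymmSndFDerivAt (by simp)
  have hd : DifferentiableAt ℝ (fderiv ℝ f) q := by
    have : ContDiffAt ℝ 1 (fderiv ℝ f) q := hfa.fderiv_right (by norm_num)
    exact this.differentiableAt (by norm_num)
  have h1 : ∀ v w : ℝ × ℝ,
      fderiv ℝ (fun p => fderiv ℝ f p v) q w = fderiv ℝ (fderiv ℝ f) q w v := by
    intro v w
    rw [fderiv_clm_apply hd (differentiableAt_const v)]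
    simp
  rw [h1, h1, hsymm]


/-- Proposition 4.2: the Codazzi condition forces equations (3.9) and (3.10). -/
theorem stmt_13 (V : Set (ℝ × ℝ)) (hVopen : IsOpen V) (hVconn : IsConnected V)
    (Φ Xa Xb ξ : ℝ × ℝ → E4)
    (hdatum : IsSurfaceDatum V Φ Xa Xb ξ)
    (hΦ : ContDiffOn ℝ (⊤ : ℕ∞) Φ V) (hXa : ContDiffOn ℝ (⊤ : ℕ∞) Xa V)
    (hXb : ContDiffOn ℝ (⊤ : ℕ∞) Xb V) (hξ : ContDiffOn ℝ (⊤ : ℕ∞) ξ V)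
    (φb φbz Pb Pbz k3b : ℝ × ℝ → ℝ)
    (hφb : ContDiffOn ℝ (⊤ : ℕ∞) φb V) (hφbz : ContDiffOn ℝ (⊤ : ℕ∞) φbz V)
    (hPb : ContDiffOn ℝ (⊤ : ℕ∞) Pb V) (hPbz : ContDiffOn ℝ (⊤ : ℕ∞) Pbz V)
    (hk3b : ContDiffOn ℝ (⊤ : ℕ∞) k3b V)
    (hreg : ∀ q ∈ V, sin (φb q) * cos (φb q) ≠ 0)
    (k1b k2b : ℝ × ℝ → ℝ)
    (hk1b : k1b = fun q => Ebar Pb q * tan (φb q) + k3b q)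
    (hk2b : k2b = fun q => -(Ebar Pb q * cot (φb q)) + k3b q)
    (hk12 : ∀ q ∈ V, k1b q * k2b q ≠ 0)
    (hΦx : ∀ q ∈ V, qx Φ q = (-(k1b q * exp (Pb q) * cos (φb q))) • Xa q)
    (hΦy : ∀ q ∈ V, qy Φ q = (-(k2b q * exp (Pb q) * sin (φb q))) • Xb q)
    (hXay : ∀ q ∈ V,
      qy Xa q =
        (qx (fun q' => exp (Pb q') * sin (φb q')) q / (exp (Pb q) * cos (φb q))) • Xb q)
    (hXbx : ∀ q ∈ V,
      qx Xb q =
        (qy (fun q' => exp (Pb q') * cos (φb q')) q / (exp (Pb q) * sin (φb q))) • Xa q)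
    (hξx : ∀ q ∈ V,
      qx ξ q =
        (Ebar Pb q * (exp (Pb q) * Pbz q * cos (φb q)
          - exp (Pb q) * φbz q * sin (φb q))) • Xa q)
    (hξy : ∀ q ∈ V,
      qy ξ q =
        (Ebar Pb q * (exp (Pb q) * Pbz q * sin (φb q)
          + exp (Pb q) * φbz q * cos (φb q))) • Xb q) :
    ∀ q ∈ V,
      (qx (EbarZ Pb Pbz) q + qx (Ebar Pb) q * φbz q * tan (φb q)
          - Ebar Pb q * qx φbz q * cot (φb q) = 0) ∧
      (qy (EbarZ Pb Pbz) q - qy (Ebar Pb) q * φbz q * cot (φb q)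
          + Ebar Pb q * qy φbz q * tan (φb q) = 0) := by
  intro q hq
  have hmem : V ∈ nhds q := hVopen.mem_nhds hq
  have hs : Real.sin (φb q) ≠ 0 := left_ne_zero_of_mul (hreg q hq)
  have hc : Real.cos (φb q) ≠ 0 := right_ne_zero_of_mul (hreg q hq)
  -- differentiability
  have dP : ∀ p ∈ V, DifferentiableAt ℝ Pb p := fun p hp =>
    (hPb.contDiffAt (hVopen.mem_nhds hp)).differentiableAt (by simp)
  have dPz : ∀ p ∈ V, DifferentiableAt ℝ Pbz p := fun p hp =>
    (hPbz.contDiffAt (hVopen.mem_nhds hp)).differentiableAt (by simp)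
  have dF : ∀ p ∈ V, DifferentiableAt ℝ φb p := fun p hp =>
    (hφb.contDiffAt (hVopen.mem_nhds hp)).differentiableAt (by simp)
  have dFz : ∀ p ∈ V, DifferentiableAt ℝ φbz p := fun p hp =>
    (hφbz.contDiffAt (hVopen.mem_nhds hp)).differentiableAt (by simp)
  have dXa : DifferentiableAt ℝ Xa q :=
    (hXa.contDiffAt hmem).differentiableAt (by simp)
  have dXb : DifferentiableAt ℝ Xb q :=
    (hXb.contDiffAt hmem).differentiableAt (by simp)
  have dAq : DifferentiableAt ℝ (fun p => Pbz p * Real.cos (φb p) - φbz p * Real.sin (φb p)) q :=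
    ((dPz q hq).mul (dF q hq).cos).sub ((dFz q hq).mul (dF q hq).sin)
  have dBq : DifferentiableAt ℝ (fun p => Pbz p * Real.sin (φb p) + φbz p * Real.cos (φb p)) q :=
    ((dPz q hq).mul (dF q hq).sin).add ((dFz q hq).mul (dF q hq).cos)
  -- rewrite ξ_x and ξ_y in simplified form on V
  have hEe : ∀ p, Ebar Pb p * Real.exp (Pb p) = 1 := by
    intro p; simp [Ebar, ← Real.exp_add]
  have hxA : ∀ p ∈ V,
      qx ξ p = (fun p => Pbz p * Real.cos (φb p) - φbz p * Real.sin (φb p)) p • Xa p := by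
    intro p hp
    rw [hξx p hp]
    congr 1
    have h1 := hEe p
    simp only
    linear_combination (Pbz p * Real.cos (φb p) - φbz p * Real.sin (φb p)) * h1
  have hyB : ∀ p ∈ V,
      qy ξ p = (fun p => Pbz p * Real.sin (φb p) + φbz p * Real.cos (φb p)) p • Xb p := by
    intro p hp
    rw [hξy p hp]
    congr 1
    have h1 := hEe p
    simp only
    linear_combination (Pbz p * Real.sin (φb p) + φbz p * Real.cos (φb p)) * h1
  -- mixed partials
  have hmix :
      fderiv ℝ (fun p => (Pbz p * Real.cos (φb p) - φbz p * Real.sin (φb p)) • Xa p) q (0, 1)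
        = fderiv ℝ (fun p => (Pbz p * Real.sin (φb p) + φbz p * Real.cos (φb p)) • Xb p) q (1, 0) := by
    have e1 : fderiv ℝ (fun p => (Pbz p * Real.cos (φb p) - φbz p * Real.sin (φb p)) • Xa p) q
        = fderiv ℝ (qx ξ) q :=
      Filter.EventuallyEq.fderiv_eq
        (Filter.eventuallyEq_of_mem hmem fun p hp => (hxA p hp).symm)
    have e2 : fderiv ℝ (fun p => (Pbz p * Real.sin (φb p) + φbz p * Real.cos (φb p)) • Xb p) q
        = fderiv ℝ (qy ξ) q :=
      Filter.EventuallyEq.fderiv_eq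
        (Filter.eventuallyEq_of_mem hmem fun p hp => (hyB p hp).symm)
    rw [e1, e2]
    exact mixed_symm hVopen hq hξ
  -- expand both sides with the product rule and the structure equations
  rw [fd_smul dAq dXa, fd_smul dBq dXb] at hmix
  have hXay' := hXay q hq
  have hXbx' := hXbx q hq
  simp only [qy, qx] at hXay' hXbx'
  rw [hXay', hXbx', smul_smul, smul_smul] at hmix
  -- extract components
  obtain ⟨haa, hbb, -, -, hab, -, -, -, -, -⟩ := hdatum q hq
  have compXa :
      fderiv ℝ (fun p => Pbz p * Real.cos (φb p) - φbz p * Real.sin (φb p)) q (0, 1)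
        = (Pbz q * Real.sin (φb q) + φbz q * Real.cos (φb q)) *
            (fderiv ℝ (fun q' => Real.exp (Pb q') * Real.cos (φb q')) q (0, 1)
              / (Real.exp (Pb q) * Real.sin (φb q))) := by
    have h := congrArg (fun w => (inner ℝ (Xa q) w : ℝ)) hmix
    simp only [inner_add_right, real_inner_smul_right] at h
    rw [haa, hab] at h
    simpa using h
  have compXb :
      (Pbz q * Real.cos (φb q) - φbz q * Real.sin (φb q)) *
          (fderiv ℝ (fun q' => Real.exp (Pb q') * Real.sin (φb q')) q (1, 0)
            / (Real.exp (Pb q) * Real.cos (φb q)))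
        = fderiv ℝ (fun p => Pbz p * Real.sin (φb p) + φbz p * Real.cos (φb p)) q (1, 0) := by
    have h := congrArg (fun w => (inner ℝ (Xb q) w : ℝ)) hmix
    have hba : ⟪Xb q, Xa q⟫ = (0 : ℝ) := by rw [real_inner_comm]; exact hab
    simp only [inner_add_right, real_inner_smul_right] at h
    rw [hbb, hba] at h
    simpa using h
  -- scalar derivative values
  have hAy : fderiv ℝ (fun p => Pbz p * Real.cos (φb p) - φbz p * Real.sin (φb p)) q (0, 1)
      = fderiv ℝ Pbz q (0, 1) * Real.cos (φb q)
        + Pbz q * (-(Real.sin (φb q)) * fderiv ℝ φb q (0, 1))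
        - (fderiv ℝ φbz q (0, 1) * Real.sin (φb q)
        + φbz q * (Real.cos (φb q) * fderiv ℝ φb q (0, 1))) := by
    rw [fd_sub ((dPz q hq).fun_mul (dF q hq).cos) ((dFz q hq).fun_mul (dF q hq).sin),
      fd_mul (dPz q hq) (dF q hq).cos, fd_mul (dFz q hq) (dF q hq).sin,
      fd_cos (dF q hq), fd_sin (dF q hq)]
  have hBx : fderiv ℝ (fun p => Pbz p * Real.sin (φb p) + φbz p * Real.cos (φb p)) q (1, 0)
      = fderiv ℝ Pbz q (1, 0) * Real.sin (φb q)
        + Pbz q * (Real.cos (φb q) * fderiv ℝ φb q (1, 0))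
        + (fderiv ℝ φbz q (1, 0) * Real.cos (φb q)
        + φbz q * (-(Real.sin (φb q)) * fderiv ℝ φb q (1, 0))) := by
    rw [fd_add ((dPz q hq).fun_mul (dF q hq).sin) ((dFz q hq).fun_mul (dF q hq).cos),
      fd_mul (dPz q hq) (dF q hq).sin, fd_mul (dFz q hq) (dF q hq).cos,
      fd_sin (dF q hq), fd_cos (dF q hq)]
  have hN1 : fderiv ℝ (fun q' => Real.exp (Pb q') * Real.sin (φb q')) q (1, 0)
      = Real.exp (Pb q) * fderiv ℝ Pb q (1, 0) * Real.sin (φb q)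
        + Real.exp (Pb q) * (Real.cos (φb q) * fderiv ℝ φb q (1, 0)) := by
    rw [fd_mul (dP q hq).exp (dF q hq).sin, fd_exp (dP q hq), fd_sin (dF q hq)]
  have hN2 : fderiv ℝ (fun q' => Real.exp (Pb q') * Real.cos (φb q')) q (0, 1)
      = Real.exp (Pb q) * fderiv ℝ Pb q (0, 1) * Real.cos (φb q)
        + Real.exp (Pb q) * (-(Real.sin (φb q)) * fderiv ℝ φb q (0, 1)) := by
    rw [fd_mul (dP q hq).exp (dF q hq).cos, fd_exp (dP q hq), fd_cos (dF q hq)]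
  -- conclusion derivative values
  have hEx : ∀ v : ℝ × ℝ, fderiv ℝ (Ebar Pb) q v
      = Real.exp (-(Pb q)) * (-(fderiv ℝ Pb q v)) := by
    intro v
    rw [show Ebar Pb = fun p => Real.exp (-(Pb p)) from rfl, fd_exp (dP q hq).fun_neg, fd_neg]
  have hEz : ∀ v : ℝ × ℝ, fderiv ℝ (EbarZ Pb Pbz) q v
      = -((Real.exp (-(Pb q)) * (-(fderiv ℝ Pb q v))) * Pbz q
          + Real.exp (-(Pb q)) * fderiv ℝ Pbz q v) := by
    intro v
    rw [show EbarZ Pb Pbz = fun p => -(Real.exp (-(Pb p)) * Pbz p) from rfl, fd_neg,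
      fd_mul ((dP q hq).fun_neg.exp) (dPz q hq), fd_exp (dP q hq).fun_neg, fd_neg]
  -- clear denominators in the component equations
  have hE0 : Real.exp (Pb q) ≠ 0 := Real.exp_ne_zero _
  rw [hAy, hN2] at compXa
  rw [hBx, hN1] at compXb
  rw [← mul_div_assoc, div_eq_iff (mul_ne_zero hE0 hc)] at compXb
  rw [← mul_div_assoc, eq_div_iff (mul_ne_zero hE0 hs)] at compXa
  have eqb' : (Pbz q * Real.cos (φb q) - φbz q * Real.sin (φb q)) *
        (fderiv ℝ Pb q (1, 0) * Real.sin (φb q) + Real.cos (φb q) * fderiv ℝ φb q (1, 0))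
      = (fderiv ℝ Pbz q (1, 0) * Real.sin (φb q)
          + Pbz q * (Real.cos (φb q) * fderiv ℝ φb q (1, 0))
          + (fderiv ℝ φbz q (1, 0) * Real.cos (φb q)
          + φbz q * (-(Real.sin (φb q)) * fderiv ℝ φb q (1, 0)))) * Real.cos (φb q) :=
    mul_left_cancel₀ hE0 (by linear_combination compXb)
  have eqa' : (fderiv ℝ Pbz q (0, 1) * Real.cos (φb q)
          + Pbz q * (-(Real.sin (φb q)) * fderiv ℝ φb q (0, 1))
          - (fderiv ℝ φbz q (0, 1) * Real.sin (φb q)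
          + φbz q * (Real.cos (φb q) * fderiv ℝ φb q (0, 1)))) * Real.sin (φb q)
      = (Pbz q * Real.sin (φb q) + φbz q * Real.cos (φb q)) *
        (fderiv ℝ Pb q (0, 1) * Real.cos (φb q) + -(Real.sin (φb q)) * fderiv ℝ φb q (0, 1)) :=
    mul_left_cancel₀ hE0 (by linear_combination compXa)
  constructor
  · simp only [qx]
    rw [hEz (1, 0), hEx (1, 0), Real.tan_eq_sin_div_cos, Real.cot_eq_cos_div_sin,
      show Ebar Pb q = Real.exp (-(Pb q)) from rfl]
    field_simp
    linear_combination (Real.exp (-(Pb q))) * eqb'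
  · simp only [qy]
    rw [hEz (0, 1), hEx (0, 1), Real.tan_eq_sin_div_cos, Real.cot_eq_cos_div_sin,
      show Ebar Pb q = Real.exp (-(Pb q)) from rfl]
    field_simp
    linear_combination (-(Real.exp (-(Pb q)))) * eqa'
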